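/- Let Φ be a Drinfeld A-module of rank r over a finite A-field L, and Q an ideal of A coprime to the A-characteristic P of L. Then the Q-torsion module Φ[Q](L̄) is isomorphic to (A/Q)^r as an A-module. -/

import Mathlib

/-!
Write `Q = (f)`. Since `Q + P = A`, `γ` vanishes on no divisor `d` of `f`, so the additive
polynomial `Φ_d` has the nonzero constant derivative `γ(d)`: it is separable, and `Φ[d](L̄)` has
exactly `deg Φ_d = q^(r deg d) = #(A/d)^r` points.

Over a principal ideal domain these counts force the `f`-torsion to be free of rank `r` over
`A/f`. By the Chinese remainder theorem it suffices to find `r` generators when `f = π^e`. Then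
`M/πM` has as many elements as `M[π]`, namely `#(A/π)^r`, so it is an `r`-dimensional
`A/π`-vector space, and lifts of a basis generate `M` by Nakayama's lemma, `π` being nilpotent
on `M`. The resulting surjection `(A/f)^r → M` is a bijection, both sides having `#(A/f)^r`
elements.
-/

/-- A Drinfeld `F_q[T]`-module over an `A`-field `E` (with structure morphism
`γ : A →+* E`), realized concretely through the identification of the Ore (twisted
polynomial) ring `E{τ}` with the ring of `F_q`-linear additive polynomials over `E`
under composition: `toFun a` is the additive polynomial through which `a ∈ A = F_q[T]`
acts, ring multiplication in `E{τ}` corresponding to composition of polynomials.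
The conditions say: `Φ` is an `F_q`-algebra homomorphism `A → E{τ}`, `D ∘ Φ = γ`
(the `τ⁰`-coefficient, i.e. the linear coefficient of the additive polynomial, is `γ a`),
and `Φ ≠ γ·τ⁰`. -/
structure DrinfeldModule (Fq : Type*) [Field Fq] [Fintype Fq]
    (E : Type*) [Field E] (γ : Polynomial Fq →+* E) where
  toFun : Polynomial Fq → Polynomial E
  map_one' : toFun 1 = Polynomial.X
  map_add' : ∀ a b, toFun (a + b) = toFun a + toFun b
  map_mul' : ∀ a b, toFun (a * b) = (toFun a).comp (toFun b)
  smul' : ∀ s : Fq, toFun (Polynomial.C s) = Polynomial.C (γ (Polynomial.C s)) * Polynomial.X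
  additive' : ∀ a k, (toFun a).coeff k ≠ 0 → ∃ i : ℕ, k = Fintype.card Fq ^ i
  lin' : ∀ a, (toFun a).coeff 1 = γ a
  nontrivial' : ∃ a, toFun a ≠ Polynomial.C (γ a) * Polynomial.X

open Polynomial

section ModuleTheory

open Submodule Set Pointwise

theorem LinearMap.card_ker_eq_card_quotient_range {R M : Type*} [Ring R] [AddCommGroup M]
    [Module R M] [Finite M] (g : M →ₗ[R] M) :
    Nat.card (LinearMap.ker g) = Nat.card (M ⧸ LinearMap.range g) := by
  have hker := card_eq_card_quotient_mul_card (LinearMap.ker g)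
  have hrange := card_eq_card_quotient_mul_card (LinearMap.range g)
  rw [Nat.card_congr g.quotKerEquivRange.toEquiv, mul_comm] at hker
  exact Nat.eq_of_mul_eq_mul_left Nat.card_pos (hker.symm.trans hrange)

theorem Submodule.eq_top_of_sup_smul_eq_top {R M : Type*} [CommRing R] [AddCommGroup M]
    [Module R M] {I : Ideal R} {n : ℕ} (hI : I ^ n • (⊤ : Submodule R M) = ⊥)
    {N : Submodule R M} (hN : N ⊔ I • ⊤ = ⊤) : N = ⊤ := by
  have key : ∀ k : ℕ, N ⊔ I ^ k • ⊤ = ⊤ := by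
    intro k
    induction k with
    | zero => simp
    | succ k ih =>
      refine top_le_iff.mp ?_
      calc ⊤ = N ⊔ I ^ k • (N ⊔ I • ⊤) := by rw [hN, ih]
        _ = N ⊔ I ^ k • N ⊔ I ^ (k + 1) • ⊤ := by
          rw [smul_sup, ← sup_assoc, pow_succ, mul_smul]
        _ ≤ N ⊔ I ^ (k + 1) • ⊤ := sup_le_sup_right (sup_le le_rfl smul_le_right) _
  simpa [hI] using key n

theorem Module.exists_fin_span_eq_top_of_card_eq_pow {K V : Type*} [Field K] [Finite K]
    [AddCommGroup V] [Module K V] [Finite V] {r : ℕ} (hcard : Nat.card V = Nat.card K ^ r) :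
    ∃ b : Fin r → V, span K (range b) = ⊤ := by
  have : Module.Finite K V := Module.Finite.of_finite
  have hrank : Module.finrank K V = r :=
    Nat.pow_right_injective Finite.one_lt_card (Module.natCard_eq_pow_finrank.symm.trans hcard)
  exact ⟨Module.finBasisOfFinrankEq K V hrank, (Module.finBasisOfFinrankEq K V hrank).span_eq⟩

theorem Module.nonempty_linearEquiv_pi_of_span_eq_top {S M : Type*} [CommRing S] [Finite S]
    [AddCommGroup M] [Module S M] [Finite M] {r : ℕ} {x : Fin r → M}
    (hx : span S (range x) = ⊤) (hcard : Nat.card M = Nat.card S ^ r) :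
    Nonempty (M ≃ₗ[S] (Fin r → S)) := by
  have hsurj : Function.Surjective (Fintype.linearCombination S x) := by
    rw [← LinearMap.range_eq_top, Fintype.range_linearCombination, hx]
  have hbij := (Nat.bijective_iff_surjective_and_card _).mpr
    ⟨hsurj, by rw [Nat.card_fun, Nat.card_fin, hcard]⟩
  exact ⟨(LinearEquiv.ofBijective _ hbij).symm⟩

variable {R N : Type*} [CommRing R] [AddCommGroup N] [Module R N]

theorem Submodule.exists_fin_span_eq_top_of_card_torsionBy [Finite N] {π : R}
    [(Ideal.span {π}).IsMaximal] [Finite (R ⧸ Ideal.span {π})] {e : ℕ}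
    (hN : ∀ m : N, π ^ e • m = 0) {r : ℕ}
    (hcard : Nat.card (torsionBy R N π) = Nat.card (R ⧸ Ideal.span {π}) ^ r) :
    ∃ x : Fin r → N, span R (range x) = ⊤ := by
  let := Ideal.Quotient.field (Ideal.span {π})
  have : Finite (N ⧸ Ideal.span {π} • (⊤ : Submodule R N)) :=
    Finite.of_surjective _ (mkQ_surjective _)
  have hquot : Nat.card (N ⧸ Ideal.span {π} • (⊤ : Submodule R N)) =
      Nat.card (R ⧸ Ideal.span {π}) ^ r := by
    have hrange : π • (⊤ : Submodule R N) = LinearMap.range (DistribSMul.toLinearMap R N π) :=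
      (LinearMap.range_eq_map _).symm
    rw [ideal_span_singleton_smul, ← hcard, hrange]
    exact ((DistribSMul.toLinearMap R N π).card_ker_eq_card_quotient_range).symm
  obtain ⟨b, hb⟩ := Module.exists_fin_span_eq_top_of_card_eq_pow hquot
  choose x hx using fun i => mkQ_surjective _ (b i)
  refine ⟨x, eq_top_of_sup_smul_eq_top (I := Ideal.span {π}) (n := e) ?_ ?_⟩
  · rw [Ideal.span_singleton_pow, ideal_span_singleton_smul, eq_bot_iff]
    rintro _ ⟨m, -, rfl⟩
    exact hN m
  · rw [sup_comm, ← map_mkQ_eq_top, map_span, ← range_comp, show _ ∘ x = b from funext hx,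
      ← restrictScalars_span R (R ⧸ Ideal.span {π}) Ideal.Quotient.mk_surjective, hb,
      restrictScalars_top]

theorem Submodule.card_torsionBy_torsionBy_of_dvd {a b : R} (hab : a ∣ b) :
    Nat.card (torsionBy R (torsionBy R N b) a) = Nat.card (torsionBy R N a) := by
  have : torsionBy R (torsionBy R N b) a = comap (torsionBy R N b).subtype (torsionBy R N a) := by
    ext x
    simp [mem_torsionBy_iff, Subtype.ext_iff]
  rw [this]
  exact Nat.card_congr (comapSubtypeEquivOfLe (torsionBy_le_torsionBy_of_dvd a b hab)).toEquiv

theorem Submodule.span_range_add_eq_torsionBy_mul {ι : Type*} {a b : R} (hab : IsCoprime a b)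
    {u v : ι → N} (hu : span R (range u) = torsionBy R N a)
    (hv : span R (range v) = torsionBy R N b) :
    span R (range (u + v)) = torsionBy R N (a * b) := by
  obtain ⟨α, β, hαβ⟩ := hab
  have hua : ∀ i, a • u i = 0 := fun i => by
    rw [← mem_torsionBy_iff, ← hu]; exact subset_span (mem_range_self i)
  have hvb : ∀ i, b • v i = 0 := fun i => by
    rw [← mem_torsionBy_iff, ← hv]; exact subset_span (mem_range_self i)
  have hle {w : ι → N} (c : R) (hw : ∀ i, c • (u + v) i = w i) :
      span R (range w) ≤ span R (range (u + v)) :=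
    span_le.mpr <| range_subset_iff.mpr fun i =>
      hw i ▸ smul_mem _ c (subset_span (mem_range_self i))
  -- `β * b` and `α * a` are the idempotents of the Chinese remainder theorem for `a * b`
  have hu_le := hle (β * b) fun i => by
    rw [Pi.add_apply, smul_add, mul_smul β b (v i), hvb, smul_zero, add_zero,
      eq_sub_of_add_eq' hαβ, sub_smul, one_smul, mul_smul, hua, smul_zero, sub_zero]
  have hv_le := hle (α * a) fun i => by
    rw [Pi.add_apply, smul_add, mul_smul α a (u i), hua, smul_zero, zero_add,
      eq_sub_of_add_eq hαβ, sub_smul, one_smul, mul_smul, hvb, smul_zero, sub_zero]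
  refine le_antisymm (span_le.mpr (range_subset_iff.mpr fun i => ?_)) fun x hx => ?_
  · rw [SetLike.mem_coe, mem_torsionBy_iff, Pi.add_apply, smul_add, mul_smul, mul_smul,
      smul_comm a b (u i), hua, hvb, smul_zero, smul_zero, add_zero]
  · rw [mem_torsionBy_iff] at hx
    have hxa : (β * b) • x ∈ torsionBy R N a := by
      rw [mem_torsionBy_iff, smul_smul, show a * (β * b) = β * (a * b) by ring, mul_smul, hx,
        smul_zero]
    have hxb : (α * a) • x ∈ torsionBy R N b := by
      rw [mem_torsionBy_iff, smul_smul, show b * (α * a) = α * (a * b) by ring, mul_smul, hx,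
        smul_zero]
    rw [← one_smul R x, ← hαβ, add_smul]
    exact add_mem (hv_le (hv ▸ hxb)) (hu_le (hu ▸ hxa))

theorem Submodule.exists_fin_span_eq_torsionBy_of_isUnit {u : R} (hu : IsUnit u) (r : ℕ) :
    ∃ x : Fin r → N, span R (range x) = torsionBy R N u := by
  refine ⟨0, ?_⟩
  rw [(Submodule.eq_bot_iff (torsionBy R N u)).mpr fun x hx => hu.smul_eq_zero.mp hx, span_eq_bot]
  rintro _ ⟨i, rfl⟩
  rfl

variable [Ring.HasFiniteQuotients R]

theorem Submodule.finite_torsionBy_of_card {d : R} (hd : d ≠ 0) {r : ℕ}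
    (hcard : Nat.card (torsionBy R N d) = Nat.card (R ⧸ Ideal.span {d}) ^ r) :
    Finite (torsionBy R N d) := by
  have := Ring.HasFiniteQuotients.finiteQuotient (I := Ideal.span {d}) (by simpa using hd)
  exact Nat.finite_of_card_ne_zero (hcard ▸ pow_ne_zero r Nat.card_pos.ne')

variable [IsDomain R] [IsPrincipalIdealRing R]

theorem Submodule.exists_fin_span_eq_torsionBy_of_card {r : ℕ} {f : R} (hf : f ≠ 0)
    (hcard : ∀ d, d ∣ f → Nat.card (torsionBy R N d) = Nat.card (R ⧸ Ideal.span {d}) ^ r) :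
    ∃ x : Fin r → N, span R (range x) = torsionBy R N f := by
  induction f using UniqueFactorizationMonoid.induction_on_coprime with
  | h0 => exact absurd rfl hf
  | h1 hu => exact exists_fin_span_eq_torsionBy_of_isUnit hu r
  | @hpr π i hπ =>
    rcases i.eq_zero_or_pos with rfl | hi
    · exact exists_fin_span_eq_torsionBy_of_isUnit (pow_zero π ▸ isUnit_one) r
    have := PrincipalIdealRing.isMaximal_of_irreducible hπ.irreducible
    have := Ring.HasFiniteQuotients.finiteQuotient (I := Ideal.span {π})
      (by simpa using hπ.ne_zero)
    have := finite_torsionBy_of_card hf (hcard _ dvd_rfl)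
    obtain ⟨x, hx⟩ := exists_fin_span_eq_top_of_card_torsionBy
      (torsionBy_isTorsionBy (π ^ i)) (r := r)
      ((card_torsionBy_torsionBy_of_dvd (dvd_pow_self π hi.ne')).trans
        (hcard π (dvd_pow_self π hi.ne')))
    refine ⟨(torsionBy R N (π ^ i)).subtype ∘ x, ?_⟩
    rw [range_comp, span_image, hx, map_top, range_subtype]
  | @hcp a b hab iha ihb =>
    obtain ⟨u, hu⟩ := iha (left_ne_zero_of_mul hf) fun d hd => hcard d (hd.mul_right b)
    obtain ⟨v, hv⟩ := ihb (right_ne_zero_of_mul hf) fun d hd => hcard d (hd.mul_left a)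
    exact ⟨u + v, span_range_add_eq_torsionBy_mul hab.isCoprime hu hv⟩

theorem Submodule.nonempty_linearEquiv_torsionBySet_of_card {r : ℕ} {f : R} (hf : f ≠ 0)
    (hcard : ∀ d, d ∣ f → Nat.card (torsionBy R N d) = Nat.card (R ⧸ Ideal.span {d}) ^ r) :
    Nonempty (torsionBySet R N (Ideal.span {f}) ≃ₗ[R ⧸ Ideal.span {f}]
      (Fin r → R ⧸ Ideal.span {f})) := by
  have heq : torsionBySet R N (Ideal.span {f}) = torsionBy R N f :=
    torsionBySet_span_singleton_eq f
  obtain ⟨x, hx⟩ := exists_fin_span_eq_torsionBy_of_card hf hcard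
  have hx_mem (i : Fin r) : x i ∈ torsionBySet R N (Ideal.span {f}) :=
    heq ▸ hx ▸ subset_span (mem_range_self i)
  let y : Fin r → torsionBySet R N (Ideal.span {f}) := fun i => ⟨x i, hx_mem i⟩
  have hy : span R (range y) = ⊤ := by
    apply map_injective_of_injective (injective_subtype _)
    rw [map_span, ← range_comp, map_top, range_subtype]
    exact hx.trans heq.symm
  have := Ring.HasFiniteQuotients.finiteQuotient (I := Ideal.span {f}) (by simpa using hf)
  have := finite_torsionBy_of_card hf (hcard f dvd_rfl)
  have : Finite (torsionBySet R N (Ideal.span {f})) := heq ▸ this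
  refine Module.nonempty_linearEquiv_pi_of_span_eq_top (x := y) ?_ ?_
  · rw [← restrictScalars_eq_top_iff R, restrictScalars_span R _ Ideal.Quotient.mk_surjective,
      hy]
  · rw [← hcard f dvd_rfl, heq]

end ModuleTheory

theorem RingHom.map_ne_zero_of_dvd_of_span_sup_ker_eq_top {R S : Type*} [CommRing R] [Ring S]
    [Nontrivial S] (g : R →+* S) {f d : R} (hf : Ideal.span {f} ⊔ RingHom.ker g = ⊤)
    (hd : d ∣ f) : g d ≠ 0 := by
  intro hgd
  have hle : Ideal.span {f} ≤ RingHom.ker g := by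
    obtain ⟨c, rfl⟩ := hd
    simp [hgd]
  exact RingHom.ker_ne_top g (sup_eq_right.mpr hle ▸ hf)

theorem Polynomial.card_quotient_span_singleton {Fq : Type*} [Field Fq] [Fintype Fq]
    {d : Fq[X]} (hd : d ≠ 0) :
    Nat.card (Fq[X] ⧸ Ideal.span {d}) = Fintype.card Fq ^ d.natDegree := by
  have : Module.Finite Fq (AdjoinRoot d) := (AdjoinRoot.powerBasis hd).finite
  rw [← AdjoinRoot.powerBasis_dim hd, ← (AdjoinRoot.powerBasis hd).finrank,
    ← Nat.card_eq_fintype_card]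
  exact Module.natCard_eq_pow_finrank (K := Fq) (V := AdjoinRoot d)

instance Polynomial.hasFiniteQuotients {Fq : Type*} [Field Fq] [Fintype Fq] :
    Ring.HasFiniteQuotients Fq[X] where
  finiteQuotient {I} hI := by
    obtain ⟨d, rfl⟩ := Submodule.IsPrincipal.principal I
    have hd : d ≠ 0 := by rintro rfl; simp at hI
    exact Nat.finite_of_card_ne_zero
      ((card_quotient_span_singleton hd).trans_ne (pow_ne_zero _ Fintype.card_ne_zero))

namespace DrinfeldModule

variable {Fq L : Type*} [Field Fq] [Fintype Fq] [Field L] {γ : Fq[X] →+* L}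
  (φ : DrinfeldModule Fq L γ)

theorem toFun_zero : φ.toFun 0 = 0 := by
  simpa using φ.map_add' 0 0

theorem derivative_toFun (a : Fq[X]) : derivative (φ.toFun a) = C (γ a) := by
  have hq : (Fintype.card Fq : L) = 0 := by
    rw [← map_natCast γ, ← C_eq_natCast, FiniteField.cast_card_eq_zero, C_0, map_zero]
  ext k
  rw [coeff_derivative, coeff_C]
  rcases k with _ | k
  · simp [φ.lin']
  by_cases h : (φ.toFun a).coeff (k + 2) = 0
  · simp [h]
  obtain ⟨_ | i, hi⟩ := φ.additive' a (k + 2) h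
  · simp at hi
  · have hk : ((k + 2 : ℕ) : L) = 0 := by rw [hi, Nat.cast_pow, hq, zero_pow i.succ_ne_zero]
    rw [if_neg k.succ_ne_zero, ← Nat.cast_succ]
    exact mul_eq_zero_of_right _ hk

theorem separable_toFun {a : Fq[X]} (ha : γ a ≠ 0) : (φ.toFun a).Separable := by
  rw [separable_def, derivative_toFun]
  exact isCoprime_one_right.of_isCoprime_of_dvd_right (isUnit_C.mpr ha.isUnit).dvd

variable {K : Type*} [Field K] [Algebra L K]

theorem eval_map_add (a : Fq[X]) (x y : K) :
    ((φ.toFun a).map (algebraMap L K)).eval (x + y) =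
      ((φ.toFun a).map (algebraMap L K)).eval x + ((φ.toFun a).map (algebraMap L K)).eval y := by
  -- through `γ`, `K` is an `F_q`-algebra, on which `z ↦ z ^ q` is additive
  let := ((algebraMap L K).comp (γ.comp C)).toAlgebra
  have hfrob (i : ℕ) (z w : K) :
      (z + w) ^ Fintype.card Fq ^ i = z ^ Fintype.card Fq ^ i + w ^ Fintype.card Fq ^ i := by
    have := map_add (FiniteField.frobeniusAlgHom Fq K ^ i) z w
    rwa [AlgHom.coe_pow, FiniteField.coe_frobeniusAlgHom, pow_iterate] at this
  simp only [eval_eq_sum, sum_def, ← Finset.sum_add_distrib]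
  refine Finset.sum_congr rfl fun k hk => ?_
  obtain ⟨i, rfl⟩ := φ.additive' a k (by simpa using hk)
  rw [hfrob, mul_add]

variable (K) in
noncomputable def toAddMonoidEnd : Fq[X] →+* AddMonoid.End K where
  toFun a := AddMonoidHom.mk' (fun x => ((φ.toFun a).map (algebraMap L K)).eval x)
    (φ.eval_map_add a)
  map_one' := by
    ext x
    show eval x _ = x
    rw [φ.map_one', Polynomial.map_X, eval_X]
  map_mul' a b := by
    ext x
    show eval x _ = eval (eval x _) _
    rw [φ.map_mul', Polynomial.map_comp, eval_comp]
  map_zero' := by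
    ext x
    show eval x _ = 0
    rw [φ.toFun_zero, Polynomial.map_zero, eval_zero]
  map_add' a b := by
    ext x
    show eval x _ = eval x _ + eval x _
    rw [φ.map_add', Polynomial.map_add, eval_add]

/-- The `A`-module `Φ(K)` of the paper: a type synonym for `K`, on which `a` acts by `Φ_a`. -/
def Points (_φ : DrinfeldModule Fq L γ) (K : Type*) : Type _ := K

def toPoints : K ≃ φ.Points K := Equiv.refl K

instance : AddCommGroup (φ.Points K) := inferInstanceAs (AddCommGroup K)

noncomputable instance : Module Fq[X] (φ.Points K) :=
  Module.compHom K (φ.toAddMonoidEnd K)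

theorem smul_toPoints (a : Fq[X]) (x : K) :
    a • φ.toPoints x = φ.toPoints (((φ.toFun a).map (algebraMap L K)).eval x) := rfl

theorem card_torsionBy_points [IsAlgClosed K] {d : Fq[X]} (hd : φ.toFun d ≠ 0)
    (hγd : γ d ≠ 0) :
    Nat.card (Submodule.torsionBy Fq[X] (φ.Points K) d) = (φ.toFun d).natDegree := by
  have hroots (x : K) :
      x ∈ (φ.toFun d).rootSet K ↔
        φ.toPoints x ∈ Submodule.torsionBy Fq[X] (φ.Points K) d := by
    rw [Submodule.mem_torsionBy_iff, smul_toPoints, mem_rootSet_of_ne hd, aeval_def, eval_map]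
    rfl
  rw [← Nat.card_congr (φ.toPoints.subtypeEquiv hroots), Nat.card_eq_fintype_card,
    card_rootSet_eq_natDegree (φ.separable_toFun hγd) (IsAlgClosed.splits _)]

theorem card_torsionBy_points_of_rank [IsAlgClosed K] {r : ℕ}
    (hrank : ∀ a : Fq[X], a ≠ 0 →
      (φ.toFun a).natDegree = Fintype.card Fq ^ (r * a.natDegree))
    {d : Fq[X]} (hd : d ≠ 0) (hγd : γ d ≠ 0) :
    Nat.card (Submodule.torsionBy Fq[X] (φ.Points K) d) =
      Nat.card (Fq[X] ⧸ Ideal.span {d}) ^ r := by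
  have hφd : φ.toFun d ≠ 0 :=
    ne_zero_of_natDegree_gt (n := 0) (by rw [hrank d hd]; positivity)
  rw [φ.card_torsionBy_points hφd hγd, hrank d hd, card_quotient_span_singleton hd, ← pow_mul,
    mul_comm]

end DrinfeldModule

theorem torsion_module_structure (Fq : Type*) [Field Fq] [Fintype Fq]
    (L : Type*) [Field L] (γ : Polynomial Fq →+* L)
    (φ : DrinfeldModule Fq L γ) (r : ℕ)
    (hrank : ∀ a : Polynomial Fq, a ≠ 0 →
      (φ.toFun a).natDegree = Fintype.card Fq ^ (r * a.natDegree))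
    (Q : Ideal (Polynomial Fq)) (hQ : Q ⊔ RingHom.ker γ = ⊤) :
    ∃ e : {x : AlgebraicClosure L |
            ∀ a ∈ Q, ((φ.toFun a).map (algebraMap L (AlgebraicClosure L))).eval x = 0} ≃
          (Fin r → Polynomial Fq ⧸ Q),
      (∀ (x y : AlgebraicClosure L) (hx : x ∈ _) (hy : y ∈ _) (hxy : x + y ∈ _),
        e ⟨x + y, hxy⟩ = e ⟨x, hx⟩ + e ⟨y, hy⟩) ∧
      (∀ (a : Polynomial Fq) (x : AlgebraicClosure L) (hx : x ∈ _)
        (hax : ((φ.toFun a).map (algebraMap L (AlgebraicClosure L))).eval x ∈ _),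
        e ⟨((φ.toFun a).map (algebraMap L (AlgebraicClosure L))).eval x, hax⟩ =
          Ideal.Quotient.mk Q a • e ⟨x, hx⟩) := by
  obtain ⟨f, rfl⟩ : ∃ f, Q = Ideal.span {f} :=
    ⟨_, (Ideal.span_singleton_generator Q).symm⟩
  have hγ (d : Fq[X]) (hd : d ∣ f) : γ d ≠ 0 :=
    γ.map_ne_zero_of_dvd_of_span_sup_ker_eq_top hQ hd
  have hf : f ≠ 0 := fun h => hγ f dvd_rfl (h ▸ map_zero γ)
  obtain ⟨ψ⟩ := Submodule.nonempty_linearEquiv_torsionBySet_of_card hf fun d hd =>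
    φ.card_torsionBy_points_of_rank (K := AlgebraicClosure L) hrank (ne_zero_of_dvd_ne_zero hf hd)
      (hγ d hd)
  refine ⟨(φ.toPoints.subtypeEquiv fun x => ?_).trans ψ.toEquiv, fun x y hx hy hxy => ?_,
    fun a x hx hax => ?_⟩
  · rw [Submodule.mem_torsionBySet_iff, Subtype.forall]
    rfl
  · exact map_add ψ ⟨x, _⟩ ⟨y, _⟩
  · exact map_smul ψ (Ideal.Quotient.mk _ a) ⟨x, _⟩
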